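/- Let (A, μ, Δ, α, β, ψ, ω) be a λ-infinitesimal BiHom-bialgebra with α, β, ψ, ω invertible. Define a⋆b = (α⁻²βω⁻¹(b₁) · β⁻¹(a)) · ψ⁻¹(b₂). Then (A, ⋆, α, β) is a left BiHom-pre-Lie algebra: αβ(a)⋆(α(b)⋆c) − (β(a)⋆α(b))⋆β(c) is symmetric in a and b. -/
import Mathlib

open TensorProduct

noncomputable section

variable (K : Type*) [Field K] (A : Type*) [AddCommGroup A] [Module K A]
variable (M : Type*) [AddCommGroup M] [Module K M]

/-- BiHom-associative algebra axioms for `(A, μ, α, β)`. -/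
def BiHomAssoc (μ : A ⊗[K] A →ₗ[K] A) (α β : A →ₗ[K] A) : Prop :=
  α ∘ₗ β = β ∘ₗ α ∧
  (∀ a b : A, α (μ (a ⊗ₜ[K] b)) = μ (α a ⊗ₜ[K] α b)) ∧
  (∀ a b : A, β (μ (a ⊗ₜ[K] b)) = μ (β a ⊗ₜ[K] β b)) ∧
  (∀ a b c : A, μ (α a ⊗ₜ[K] μ (b ⊗ₜ[K] c)) = μ (μ (a ⊗ₜ[K] b) ⊗ₜ[K] β c))

/-- BiHom-coassociative coalgebra axioms for `(A, Δ, ψ, ω)`. -/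
def BiHomCoassoc (Δ : A →ₗ[K] A ⊗[K] A) (ψ ω : A →ₗ[K] A) : Prop :=
  ψ ∘ₗ ω = ω ∘ₗ ψ ∧
  (TensorProduct.map ψ ψ ∘ₗ Δ = Δ ∘ₗ ψ) ∧
  (TensorProduct.map ω ω ∘ₗ Δ = Δ ∘ₗ ω) ∧
  ((TensorProduct.assoc K A A A).toLinearMap ∘ₗ TensorProduct.map Δ ψ ∘ₗ Δ
    = TensorProduct.map ω Δ ∘ₗ Δ)

/-- The compatibility condition of a `λ`-infinitesimal BiHom-bialgebra:
`Δ(ab) = ω(a)b₁ ⊗ β(b₂) + α(a₁) ⊗ a₂ψ(b) + λ (αω(a) ⊗ βψ(b))`. -/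
def InfBHCompat (lam : K) (μ : A ⊗[K] A →ₗ[K] A) (Δ : A →ₗ[K] A ⊗[K] A)
    (α β ψ ω : A →ₗ[K] A) : Prop :=
  ∀ a b : A, Δ (μ (a ⊗ₜ[K] b)) =
    TensorProduct.map μ β ((TensorProduct.assoc K A A A).symm (ω a ⊗ₜ[K] Δ b))
    + TensorProduct.map α μ ((TensorProduct.assoc K A A A) (Δ a ⊗ₜ[K] ψ b))
    + lam • (α (ω a) ⊗ₜ[K] β (ψ b))

/-- `λ`-infinitesimal BiHom-bialgebra. -/
def IsInfBH (lam : K) (μ : A ⊗[K] A →ₗ[K] A) (Δ : A →ₗ[K] A ⊗[K] A)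
    (α β ψ ω : A →ₗ[K] A) : Prop :=
  BiHomAssoc K A μ α β ∧ BiHomCoassoc K A Δ ψ ω ∧
  α ∘ₗ ψ = ψ ∘ₗ α ∧ α ∘ₗ ω = ω ∘ₗ α ∧ β ∘ₗ ψ = ψ ∘ₗ β ∧ β ∘ₗ ω = ω ∘ₗ β ∧
  (TensorProduct.map α α ∘ₗ Δ = Δ ∘ₗ α) ∧
  (TensorProduct.map β β ∘ₗ Δ = Δ ∘ₗ β) ∧
  (ψ ∘ₗ μ = μ ∘ₗ TensorProduct.map ψ ψ) ∧
  (ω ∘ₗ μ = μ ∘ₗ TensorProduct.map ω ω) ∧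
  InfBHCompat K A lam μ Δ α β ψ ω

/-- Unit axioms for a unitary `λ`-infBH-bialgebra (or unitary BiHom-algebra). -/
def IsUnitBH (μ : A ⊗[K] A →ₗ[K] A) (α β ψ ω : A →ₗ[K] A) (e : A) : Prop :=
  α e = e ∧ β e = e ∧ ψ e = e ∧ ω e = e ∧
  (∀ a : A, μ (a ⊗ₜ[K] e) = α a) ∧ (∀ a : A, μ (e ⊗ₜ[K] a) = β a)

/-- Counit axioms for a counitary `λ`-infBH-bialgebra. -/
def IsCounitBH (Δ : A →ₗ[K] A ⊗[K] A) (α β ψ ω : A →ₗ[K] A) (ε : A →ₗ[K] K) : Prop :=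
  ε ∘ₗ α = ε ∧ ε ∘ₗ β = ε ∧ ε ∘ₗ ψ = ε ∧ ε ∘ₗ ω = ε ∧
  ((TensorProduct.rid K A).toLinearMap ∘ₗ TensorProduct.map LinearMap.id ε ∘ₗ Δ = ω) ∧
  ((TensorProduct.lid K A).toLinearMap ∘ₗ TensorProduct.map ε LinearMap.id ∘ₗ Δ = ψ)

/-- Left BiHom-module axioms. -/
def IsLeftBiHomModule (μ : A ⊗[K] A →ₗ[K] A) (α β : A →ₗ[K] A)
    (γ : A ⊗[K] M →ₗ[K] M) (αM βM : M →ₗ[K] M) : Prop :=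
  αM ∘ₗ βM = βM ∘ₗ αM ∧
  (∀ (a : A) (m : M), αM (γ (a ⊗ₜ[K] m)) = γ (α a ⊗ₜ[K] αM m)) ∧
  (∀ (a : A) (m : M), βM (γ (a ⊗ₜ[K] m)) = γ (β a ⊗ₜ[K] βM m)) ∧
  (∀ (a a' : A) (m : M),
    γ (α a ⊗ₜ[K] γ (a' ⊗ₜ[K] m)) = γ (μ (a ⊗ₜ[K] a') ⊗ₜ[K] βM m))

/-- Left BiHom-comodule axioms. -/
def IsLeftBiHomComodule (Δ : A →ₗ[K] A ⊗[K] A) (ψ ω : A →ₗ[K] A)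
    (ρ : M →ₗ[K] A ⊗[K] M) (ψM ωM : M →ₗ[K] M) : Prop :=
  ψM ∘ₗ ωM = ωM ∘ₗ ψM ∧
  (TensorProduct.map ψ ψM ∘ₗ ρ = ρ ∘ₗ ψM) ∧
  (TensorProduct.map ω ωM ∘ₗ ρ = ρ ∘ₗ ωM) ∧
  ((TensorProduct.assoc K A A M).toLinearMap ∘ₗ TensorProduct.map Δ ψM ∘ₗ ρ
    = TensorProduct.map ω ρ ∘ₗ ρ)

/-- Left `λ`-infBH-Hopf module over a `λ`-infBH-bialgebra. -/
def IsInfBHHopfModule (lam : K) (μ : A ⊗[K] A →ₗ[K] A) (Δ : A →ₗ[K] A ⊗[K] A)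
    (α β ψ ω : A →ₗ[K] A) (γ : A ⊗[K] M →ₗ[K] M) (ρ : M →ₗ[K] A ⊗[K] M)
    (αM βM ψM ωM : M →ₗ[K] M) : Prop :=
  IsLeftBiHomModule K A M μ α β γ αM βM ∧
  IsLeftBiHomComodule K A M Δ ψ ω ρ ψM ωM ∧
  αM ∘ₗ ψM = ψM ∘ₗ αM ∧ αM ∘ₗ ωM = ωM ∘ₗ αM ∧
  βM ∘ₗ ψM = ψM ∘ₗ βM ∧ βM ∘ₗ ωM = ωM ∘ₗ βM ∧
  ∀ (a : A) (m : M), ρ (γ (a ⊗ₜ[K] m)) =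
    TensorProduct.map μ βM ((TensorProduct.assoc K A A M).symm (ω a ⊗ₜ[K] ρ m))
    + TensorProduct.map α γ ((TensorProduct.assoc K A A M) (Δ a ⊗ₜ[K] ψM m))
    + lam • (α (ω a) ⊗ₜ[K] βM (ψM m))

/-- `a ⋆ b = (α⁻²βω⁻¹(b₁) · β⁻¹(a)) · ψ⁻¹(b₂)`. -/
def Star17 (K : Type*) [Field K] (A : Type*) [AddCommGroup A] [Module K A]
    (μ : A ⊗[K] A →ₗ[K] A) (Δ : A →ₗ[K] A ⊗[K] A) (α β ψ ω : A ≃ₗ[K] A)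
    (a b : A) : A :=
  (μ ∘ₗ TensorProduct.map
      ((μ ∘ₗ ((TensorProduct.mk K A A).flip (β.symm a))) ∘ₗ
        (α.symm.toLinearMap ∘ₗ α.symm.toLinearMap ∘ₗ β.toLinearMap ∘ₗ ω.symm.toLinearMap))
      ψ.symm.toLinearMap) (Δ b)

private lemma commSymm {e : A ≃ₗ[K] A} {f : A → A} (h : ∀ x, f (e x) = e (f x)) :
    ∀ x, f (e.symm x) = e.symm (f x) := fun x =>
  e.injective (by rw [e.apply_symm_apply, ← h, e.apply_symm_apply])

private lemma mulSymm {μ : A ⊗[K] A →ₗ[K] A} {e : A ≃ₗ[K] A}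
    (h : ∀ x y, e (μ (x ⊗ₜ[K] y)) = μ (e x ⊗ₜ[K] e y)) :
    ∀ x y, e.symm (μ (x ⊗ₜ[K] y)) = μ (e.symm x ⊗ₜ[K] e.symm y) := fun x y =>
  e.injective (by rw [e.apply_symm_apply, h, e.apply_symm_apply, e.apply_symm_apply])

private def phiL (α β ω : A ≃ₗ[K] A) : A →ₗ[K] A :=
  α.symm.toLinearMap ∘ₗ α.symm.toLinearMap ∘ₗ β.toLinearMap ∘ₗ ω.symm.toLinearMap

private def Lp (μ : A ⊗[K] A →ₗ[K] A) (α β ψ ω : A ≃ₗ[K] A) (t : A) :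
    A ⊗[K] A →ₗ[K] A :=
  μ ∘ₗ TensorProduct.map ((μ ∘ₗ ((TensorProduct.mk K A A).flip (β.symm t))) ∘ₗ phiL K A α β ω)
    ψ.symm.toLinearMap

private def g1D (μ : A ⊗[K] A →ₗ[K] A) (α β ω : A ≃ₗ[K] A) (t : A) : A →ₗ[K] A :=
  ω.toLinearMap ∘ₗ μ ∘ₗ ((TensorProduct.mk K A A).flip (β.symm t)) ∘ₗ phiL K A α β ω

private def h2D (μ : A ⊗[K] A →ₗ[K] A) (α β ω : A ≃ₗ[K] A) (ξ : A ⊗[K] A) :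
    A →ₗ[K] A ⊗[K] A :=
  TensorProduct.map μ β.toLinearMap ∘ₗ (TensorProduct.assoc K A A A).symm.toLinearMap
    ∘ₗ ((TensorProduct.mk K A (A ⊗[K] A)).flip
        (TensorProduct.map β.symm.toLinearMap β.symm.toLinearMap ξ))
    ∘ₗ ω.toLinearMap ∘ₗ phiL K A α β ω

private def restD (μ : A ⊗[K] A →ₗ[K] A) (α β ψ ω : A ≃ₗ[K] A) (t : A) :
    A ⊗[K] A →ₗ[K] A ⊗[K] A :=
  TensorProduct.map α.toLinearMap μ ∘ₗ (TensorProduct.assoc K A A A).toLinearMap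
    ∘ₗ ((TensorProduct.mk K (A ⊗[K] A) A).flip (ψ (β.symm t)))
    ∘ₗ TensorProduct.map (phiL K A α β ω) (phiL K A α β ω)

private def h4D (lam : K) (α β ψ ω : A ≃ₗ[K] A) (t : A) : A →ₗ[K] A ⊗[K] A :=
  lam • (((TensorProduct.mk K A A).flip (β (ψ (β.symm t)))) ∘ₗ α.toLinearMap
    ∘ₗ ω.toLinearMap ∘ₗ phiL K A α β ω)
set_option maxHeartbeats 4000000 in
/-- a `λ`-infBH-bialgebra with invertible structure maps gives a
left BiHom-pre-Lie algebra `(A, ⋆, α, β)`. -/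
theorem biHomPreLie_of_infBH_invertible
    (K : Type*) [Field K] (A : Type*) [AddCommGroup A] [Module K A]
    (lam : K) (μ : A ⊗[K] A →ₗ[K] A) (Δ : A →ₗ[K] A ⊗[K] A) (α β ψ ω : A ≃ₗ[K] A)
    (hbi : IsInfBH K A lam μ Δ α.toLinearMap β.toLinearMap ψ.toLinearMap ω.toLinearMap) :
    (∀ a b : A, α (Star17 K A μ Δ α β ψ ω a b)
      = Star17 K A μ Δ α β ψ ω (α a) (α b)) ∧
    (∀ a b : A, β (Star17 K A μ Δ α β ψ ω a b)
      = Star17 K A μ Δ α β ψ ω (β a) (β b)) ∧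
    (∀ a b c : A,
      Star17 K A μ Δ α β ψ ω (α (β a)) (Star17 K A μ Δ α β ψ ω (α b) c)
        - Star17 K A μ Δ α β ψ ω (Star17 K A μ Δ α β ψ ω (β a) (α b)) (β c)
      = Star17 K A μ Δ α β ψ ω (α (β b)) (Star17 K A μ Δ α β ψ ω (α a) c)
        - Star17 K A μ Δ α β ψ ω (Star17 K A μ Δ α β ψ ω (β b) (α a)) (β c)) := by
  classical
  obtain ⟨⟨hab, hαμ, hβμ, hA⟩, ⟨hψω, hψΔ, hωΔ, hco⟩, hαψ, hαω, hβψ, hβω, hαΔ, hβΔ,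
    hψμ, hωμ, hcomp⟩ := hbi
  -- pointwise commutation facts, oriented to move lower-ranked maps (α < β < ψ < ω) outwards
  have quad : ∀ (e₁ e₂ : A ≃ₗ[K] A), (∀ x, e₁ (e₂ x) = e₂ (e₁ x)) →
      (∀ x, e₁ (e₂.symm x) = e₂.symm (e₁ x)) ∧ (∀ x, e₁.symm (e₂ x) = e₂ (e₁.symm x)) ∧
      (∀ x, e₁.symm (e₂.symm x) = e₂.symm (e₁.symm x)) := by
    intro e₁ e₂ h
    have h2 : ∀ x, e₁.symm (e₂ x) = e₂ (e₁.symm x) := fun x =>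
      (commSymm K A (fun y => (h y).symm) x).symm
    exact ⟨commSymm K A h, h2, commSymm K A h2⟩
  have extract : ∀ (e₁ e₂ : A ≃ₗ[K] A), e₁.toLinearMap ∘ₗ e₂.toLinearMap = e₂.toLinearMap ∘ₗ e₁.toLinearMap →
      ∀ x, e₂ (e₁ x) = e₁ (e₂ x) := by
    intro e₁ e₂ h x
    have h' := LinearMap.congr_fun h x
    simp only [LinearMap.comp_apply, LinearEquiv.coe_coe] at h'
    exact h'.symm
  have cab : ∀ x, β (α x) = α (β x) := extract α β hab
  have cap : ∀ x, ψ (α x) = α (ψ x) := extract α ψ hαψ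
  have cao : ∀ x, ω (α x) = α (ω x) := extract α ω hαω
  have cbp : ∀ x, ψ (β x) = β (ψ x) := extract β ψ hβψ
  have cbo : ∀ x, ω (β x) = β (ω x) := extract β ω hβω
  have cpo : ∀ x, ω (ψ x) = ψ (ω x) := extract ψ ω hψω
  obtain ⟨cab1, cab2, cab3⟩ := quad β α cab
  obtain ⟨cap1, cap2, cap3⟩ := quad ψ α cap
  obtain ⟨cao1, cao2, cao3⟩ := quad ω α cao
  obtain ⟨cbp1, cbp2, cbp3⟩ := quad ψ β cbp
  obtain ⟨cbo1, cbo2, cbo3⟩ := quad ω β cbo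
  obtain ⟨cpo1, cpo2, cpo3⟩ := quad ω ψ cpo
  -- multiplicativity of the structure maps and their inverses
  have mα : ∀ x y, α (μ (x ⊗ₜ[K] y)) = μ (α x ⊗ₜ[K] α y) := fun x y => by simpa using hαμ x y
  have mβ : ∀ x y, β (μ (x ⊗ₜ[K] y)) = μ (β x ⊗ₜ[K] β y) := fun x y => by simpa using hβμ x y
  have mψ : ∀ x y, ψ (μ (x ⊗ₜ[K] y)) = μ (ψ x ⊗ₜ[K] ψ y) := fun x y => by
    simpa using LinearMap.congr_fun hψμ (x ⊗ₜ[K] y)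
  have mω : ∀ x y, ω (μ (x ⊗ₜ[K] y)) = μ (ω x ⊗ₜ[K] ω y) := fun x y => by
    simpa using LinearMap.congr_fun hωμ (x ⊗ₜ[K] y)
  have mα' := mulSymm K A mα
  have mβ' := mulSymm K A mβ
  have mψ' := mulSymm K A mψ
  have mω' := mulSymm K A mω
  -- BiHom-associativity
  have HA : ∀ x y z, μ (α x ⊗ₜ[K] μ (y ⊗ₜ[K] z)) = μ (μ (x ⊗ₜ[K] y) ⊗ₜ[K] β z) := by
    simpa using hA
  have HA' : ∀ x y z, μ (x ⊗ₜ[K] μ (y ⊗ₜ[K] z)) = μ (μ (α.symm x ⊗ₜ[K] y) ⊗ₜ[K] β z) :=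
    fun x y z => by simpa using HA (α.symm x) y z
  -- comultiplication commutation rules
  have mapcancel : ∀ (e : A ≃ₗ[K] A) (X : A ⊗[K] A),
      TensorProduct.map e.symm.toLinearMap e.symm.toLinearMap
        (TensorProduct.map e.toLinearMap e.toLinearMap X) = X := by
    intro e X
    rw [← LinearMap.comp_apply, ← TensorProduct.map_comp]
    have h1 : e.symm.toLinearMap ∘ₗ e.toLinearMap = LinearMap.id := by ext x; simp
    rw [h1, TensorProduct.map_id, LinearMap.id_apply]
  have dα : ∀ x, Δ (α x) = TensorProduct.map α.toLinearMap α.toLinearMap (Δ x) := fun x => by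
    simpa using (LinearMap.congr_fun hαΔ x).symm
  have dβ : ∀ x, Δ (β x) = TensorProduct.map β.toLinearMap β.toLinearMap (Δ x) := fun x => by
    simpa using (LinearMap.congr_fun hβΔ x).symm
  have dψ : ∀ x, Δ (ψ x) = TensorProduct.map ψ.toLinearMap ψ.toLinearMap (Δ x) := fun x => by
    simpa using (LinearMap.congr_fun hψΔ x).symm
  have dω : ∀ x, Δ (ω x) = TensorProduct.map ω.toLinearMap ω.toLinearMap (Δ x) := fun x => by
    simpa using (LinearMap.congr_fun hωΔ x).symm
  have dsymm : ∀ (e : A ≃ₗ[K] A),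
      (∀ x, Δ (e x) = TensorProduct.map e.toLinearMap e.toLinearMap (Δ x)) →
      ∀ x, Δ (e.symm x) = TensorProduct.map e.symm.toLinearMap e.symm.toLinearMap (Δ x) := by
    intro e he x
    conv_rhs => rw [← e.apply_symm_apply x]
    rw [he, mapcancel]
  have dα' := dsymm α dα
  have dβ' := dsymm β dβ
  have dψ' := dsymm ψ dψ
  have dω' := dsymm ω dω
  have dφ : ∀ x, Δ (phiL K A α β ω x)
      = TensorProduct.map (phiL K A α β ω) (phiL K A α β ω) (Δ x) := by
    intro x
    simp only [phiL, LinearMap.coe_comp, Function.comp_apply, LinearEquiv.coe_coe,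
      TensorProduct.map_comp, LinearMap.comp_apply]
    rw [dα', dα', dβ, dω']
  -- evaluation of the star-product map on pure tensors
  have lpure : ∀ t x y, Lp K A μ α β ψ ω t (x ⊗ₜ[K] y)
      = μ (μ (phiL K A α β ω x ⊗ₜ[K] β.symm t) ⊗ₜ[K] ψ.symm y) := fun t x y => by
    simp [Lp, TensorProduct.mk_apply]
  have hS : ∀ x y, Star17 K A μ Δ α β ψ ω x y = Lp K A μ α β ψ ω x (Δ y) := fun _ _ => rfl
  -- α and β are multiplicative for ⋆
  have pα : ∀ t (W : A ⊗[K] A), α (Lp K A μ α β ψ ω t W)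
      = Lp K A μ α β ψ ω (α t) (TensorProduct.map α.toLinearMap α.toLinearMap W) := by
    intro t W
    induction W using TensorProduct.induction_on with
    | zero => simp
    | add X Y hX hY => simp only [map_add, hX, hY]
    | tmul x y =>
      simp only [TensorProduct.map_tmul, LinearEquiv.coe_coe, lpure, phiL,
        LinearMap.coe_comp, Function.comp_apply]
      simp [mα, mβ, mψ, mω, mα', mβ', mψ', mω', cab, cab1, cab2, cab3, cap, cap1, cap2, cap3,
        cao, cao1, cao2, cao3, cbp, cbp1, cbp2, cbp3, cbo, cbo1, cbo2, cbo3,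
        cpo, cpo1, cpo2, cpo3]
  have pβ : ∀ t (W : A ⊗[K] A), β (Lp K A μ α β ψ ω t W)
      = Lp K A μ α β ψ ω (β t) (TensorProduct.map β.toLinearMap β.toLinearMap W) := by
    intro t W
    induction W using TensorProduct.induction_on with
    | zero => simp
    | add X Y hX hY => simp only [map_add, hX, hY]
    | tmul x y =>
      simp only [TensorProduct.map_tmul, LinearEquiv.coe_coe, lpure, phiL,
        LinearMap.coe_comp, Function.comp_apply]
      simp [mα, mβ, mψ, mω, mα', mβ', mψ', mω', cab, cab1, cab2, cab3, cap, cap1, cap2, cap3,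
        cao, cao1, cao2, cao3, cbp, cbp1, cbp2, cbp3, cbo, cbo1, cbo2, cbo3,
        cpo, cpo1, cpo2, cpo3]
  refine ⟨fun a b => ?_, fun a b => ?_, fun a b c => ?_⟩
  · simp only [hS]
    rw [dα b]
    exact pα a (Δ b)
  · simp only [hS]
    rw [dβ b]
    exact pβ a (Δ b)
  -- ============ the pre-Lie identity ============
  · -- step 1 : expansion of Δ of a star product
    have step1 : ∀ t (W : A ⊗[K] A), Δ (Lp K A μ α β ψ ω t W) =
        TensorProduct.map μ β.toLinearMap ((TensorProduct.assoc K A A A).symm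
          (TensorProduct.map (g1D K A μ α β ω t)
            ((TensorProduct.map ψ.symm.toLinearMap ψ.symm.toLinearMap) ∘ₗ Δ) W))
      + TensorProduct.map α.toLinearMap μ ((TensorProduct.assoc K A A A)
          (TensorProduct.map (h2D K A μ α β ω (Δ t)) LinearMap.id W))
      + TensorProduct.map α.toLinearMap μ ((TensorProduct.assoc K A A A)
          (TensorProduct.map (restD K A μ α β ψ ω t ∘ₗ Δ) LinearMap.id W))
      + TensorProduct.map α.toLinearMap μ ((TensorProduct.assoc K A A A)
          (TensorProduct.map (h4D K A lam α β ψ ω t) LinearMap.id W))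
      + lam • (TensorProduct.map (α.toLinearMap ∘ₗ g1D K A μ α β ω t) β.toLinearMap W) := by
      intro t W
      induction W using TensorProduct.induction_on with
      | zero => simp
      | add X Y hX hY =>
        simp only [map_add, tmul_add, add_tmul, smul_add, hX, hY]
        abel
      | tmul x y =>
        rw [lpure, hcomp, hcomp, dψ', dβ', dφ]
        simp only [g1D, h2D, restD, h4D, TensorProduct.map_tmul, LinearMap.coe_comp,
          Function.comp_apply, TensorProduct.mk_apply, LinearMap.flip_apply,
          LinearMap.id_coe, id_eq, LinearEquiv.coe_coe, LinearMap.smul_apply,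
          LinearEquiv.apply_symm_apply, add_tmul, tmul_add, map_add, map_smul,
          smul_tmul', LinearMap.id_apply]
        abel
    -- step 2 : the two terms bilinear in Δb cancel against the right-hand star product
    have lpadd : ∀ (s₁ s₂ : A) (X : A ⊗[K] A),
        Lp K A μ α β ψ ω (s₁ + s₂) X = Lp K A μ α β ψ ω s₁ X + Lp K A μ α β ψ ω s₂ X := by
      intro s₁ s₂ X
      induction X using TensorProduct.induction_on with
      | zero => simp
      | tmul x y => simp [lpure, map_add, tmul_add, add_tmul]
      | add X Y hX hY => rw [map_add, hX, hY, map_add, map_add]; abel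
    have step2 : ∀ (a : A) (T W : A ⊗[K] A),
        Lp K A μ α β ψ ω (α (β a)) (TensorProduct.map α.toLinearMap μ
          ((TensorProduct.assoc K A A A)
            (TensorProduct.map (h2D K A μ α β ω
              (TensorProduct.map α.toLinearMap α.toLinearMap T)) LinearMap.id W)))
        = Lp K A μ α β ψ ω
            (Lp K A μ α β ψ ω (β a) (TensorProduct.map α.toLinearMap α.toLinearMap T))
            (TensorProduct.map β.toLinearMap β.toLinearMap W) := by
      have h2add : ∀ ξ₁ ξ₂ : A ⊗[K] A, h2D K A μ α β ω (ξ₁ + ξ₂)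
          = h2D K A μ α β ω ξ₁ + h2D K A μ α β ω ξ₂ := by
        intro ξ₁ ξ₂
        ext x
        simp [h2D, map_add, tmul_add]
      intro a T W
      induction W using TensorProduct.induction_on with
      | zero => simp
      | add X Y hX hY => simp only [map_add, hX, hY]
      | tmul u v =>
        induction T using TensorProduct.induction_on with
        | zero => simp [h2D, lpure]
        | add T₁ T₂ h₁ h₂ =>
          simp only [map_add, h2add, TensorProduct.map_add_left, LinearMap.add_apply,
            lpadd, h₁, h₂]
        | tmul p q =>
          simp only [h2D, lpure, TensorProduct.map_tmul, LinearMap.coe_comp,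
            Function.comp_apply, TensorProduct.mk_apply, LinearMap.flip_apply,
            LinearMap.id_coe, id_eq, LinearEquiv.coe_coe,
            TensorProduct.assoc_tmul, TensorProduct.assoc_symm_tmul]
          simp [HA', phiL, LinearMap.coe_comp, Function.comp_apply, LinearEquiv.coe_coe,
            mα, mβ, mψ, mω, mα', mβ', mψ', mω', cab, cab1, cab2, cab3, cap, cap1, cap2, cap3,
            cao, cao1, cao2, cao3, cbp, cbp1, cbp2, cbp3, cbo, cbo1, cbo2, cbo3,
            cpo, cpo1, cpo2, cpo3]
    -- the two symmetry lemmas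
    have S1 : ∀ (a b : A) (X : A ⊗[K] (A ⊗[K] A)),
        Lp K A μ α β ψ ω (α (β a)) (TensorProduct.map μ β.toLinearMap
          ((TensorProduct.assoc K A A A).symm
            (TensorProduct.map (g1D K A μ α β ω (α b) ∘ₗ ω.symm.toLinearMap)
              ((TensorProduct.map ψ.symm.toLinearMap ψ.symm.toLinearMap) ∘ₗ
                (TensorProduct.map LinearMap.id ψ.toLinearMap)) X)))
        = Lp K A μ α β ψ ω (α (β b)) (TensorProduct.map α.toLinearMap μ
            ((TensorProduct.assoc K A A A)
              (TensorProduct.map (restD K A μ α β ψ ω (α a)) LinearMap.id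
                ((TensorProduct.assoc K A A A).symm X)))) := by
      intro a b X
      induction X using TensorProduct.induction_on with
      | zero => simp
      | add X Y hX hY => simp only [map_add, hX, hY]
      | tmul x Z =>
        induction Z using TensorProduct.induction_on with
        | zero => simp
        | add Z₁ Z₂ h₁ h₂ => simp only [map_add, tmul_add, h₁, h₂]
        | tmul y z =>
          simp only [g1D, restD, lpure, TensorProduct.map_tmul, LinearMap.coe_comp,
            Function.comp_apply, TensorProduct.mk_apply, LinearMap.flip_apply,
            LinearMap.id_coe, id_eq, LinearEquiv.coe_coe,
            TensorProduct.assoc_tmul, TensorProduct.assoc_symm_tmul]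
          simp [HA', phiL, LinearMap.coe_comp, Function.comp_apply, LinearEquiv.coe_coe,
            mα, mβ, mψ, mω, mα', mβ', mψ', mω', cab, cab1, cab2, cab3, cap, cap1, cap2, cap3,
            cao, cao1, cao2, cao3, cbp, cbp1, cbp2, cbp3, cbo, cbo1, cbo2, cbo3,
            cpo, cpo1, cpo2, cpo3]
    have S2 : ∀ (a b : A) (W : A ⊗[K] A),
        Lp K A μ α β ψ ω (α (β a)) (TensorProduct.map α.toLinearMap μ
          ((TensorProduct.assoc K A A A)
            (TensorProduct.map (h4D K A lam α β ψ ω (α b)) LinearMap.id W)))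
        = Lp K A μ α β ψ ω (α (β b))
            (lam • (TensorProduct.map (α.toLinearMap ∘ₗ g1D K A μ α β ω (α a))
              β.toLinearMap W)) := by
      intro a b W
      induction W using TensorProduct.induction_on with
      | zero => simp
      | add X Y hX hY => simp only [map_add, tmul_add, smul_add, hX, hY]
      | tmul u v =>
        simp only [g1D, h4D, lpure, TensorProduct.map_tmul, LinearMap.coe_comp,
          Function.comp_apply, TensorProduct.mk_apply, LinearMap.flip_apply,
          LinearMap.id_coe, id_eq, LinearEquiv.coe_coe, LinearMap.smul_apply,
          TensorProduct.assoc_tmul, TensorProduct.assoc_symm_tmul]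
        simp [HA', phiL, lpure, smul_tmul, tmul_smul, map_smul, LinearMap.coe_comp, Function.comp_apply, LinearEquiv.coe_coe,
          mα, mβ, mψ, mω, mα', mβ', mψ', mω', cab, cab1, cab2, cab3, cap, cap1, cap2, cap3,
          cao, cao1, cao2, cao3, cbp, cbp1, cbp2, cbp3, cbo, cbo1, cbo2, cbo3,
          cpo, cpo1, cpo2, cpo3]
    -- coassociativity in element form
    have aux1 : ∀ Y : (A ⊗[K] A) ⊗[K] A,
        (TensorProduct.assoc K A A A) (TensorProduct.map LinearMap.id ψ.toLinearMap Y)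
        = TensorProduct.map LinearMap.id (TensorProduct.map LinearMap.id ψ.toLinearMap)
            ((TensorProduct.assoc K A A A) Y) := by
      intro Y
      induction Y using TensorProduct.induction_on with
      | zero => simp
      | tmul Z z =>
        induction Z using TensorProduct.induction_on with
        | zero => simp
        | tmul u v => simp
        | add Z₁ Z₂ h₁ h₂ => simp only [add_tmul, map_add, h₁, h₂]
      | add Y₁ Y₂ h₁ h₂ => simp only [map_add, h₁, h₂]
    have hw : (TensorProduct.assoc K A A A) (TensorProduct.map Δ ψ.toLinearMap (Δ c))
        = TensorProduct.map ω.toLinearMap Δ (Δ c) := by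
      simpa using LinearMap.congr_fun hco c
    have hww : TensorProduct.map Δ ψ.toLinearMap (Δ c)
        = TensorProduct.map LinearMap.id ψ.toLinearMap
            (TensorProduct.map Δ LinearMap.id (Δ c)) := by
      conv_rhs => rw [← LinearMap.comp_apply, ← TensorProduct.map_comp, LinearMap.id_comp,
        LinearMap.comp_id]
    have sc : ω.symm.toLinearMap ∘ₗ ω.toLinearMap = LinearMap.id := by ext x; simp
    have h4 : TensorProduct.map ω.toLinearMap Δ (Δ c)
        = TensorProduct.map LinearMap.id (TensorProduct.map LinearMap.id ψ.toLinearMap)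
            ((TensorProduct.assoc K A A A) (TensorProduct.map Δ LinearMap.id (Δ c))) := by
      rw [← hw, hww, aux1]
    have ce : TensorProduct.map LinearMap.id Δ (Δ c)
        = TensorProduct.map ω.symm.toLinearMap (TensorProduct.map LinearMap.id ψ.toLinearMap)
            ((TensorProduct.assoc K A A A) (TensorProduct.map Δ LinearMap.id (Δ c))) := by
      calc TensorProduct.map LinearMap.id Δ (Δ c)
          = TensorProduct.map (ω.symm.toLinearMap ∘ₗ ω.toLinearMap) (LinearMap.id ∘ₗ Δ) (Δ c) := by
            rw [sc, LinearMap.id_comp]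
        _ = TensorProduct.map ω.symm.toLinearMap LinearMap.id
              (TensorProduct.map ω.toLinearMap Δ (Δ c)) := by
            rw [TensorProduct.map_comp, LinearMap.comp_apply]
        _ = TensorProduct.map ω.symm.toLinearMap LinearMap.id
              (TensorProduct.map LinearMap.id (TensorProduct.map LinearMap.id ψ.toLinearMap)
                ((TensorProduct.assoc K A A A) (TensorProduct.map Δ LinearMap.id (Δ c)))) := by
            rw [h4]
        _ = TensorProduct.map (ω.symm.toLinearMap ∘ₗ LinearMap.id)
              (LinearMap.id ∘ₗ TensorProduct.map LinearMap.id ψ.toLinearMap)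
              ((TensorProduct.assoc K A A A) (TensorProduct.map Δ LinearMap.id (Δ c))) := by
            rw [TensorProduct.map_comp, LinearMap.comp_apply]
        _ = TensorProduct.map ω.symm.toLinearMap (TensorProduct.map LinearMap.id ψ.toLinearMap)
              ((TensorProduct.assoc K A A A) (TensorProduct.map Δ LinearMap.id (Δ c))) := by
            rw [LinearMap.comp_id, LinearMap.id_comp]
    -- rewriting of the first and third expansion terms through coassociativity
    have splitmap : ∀ (f : A →ₗ[K] A) (g : A ⊗[K] A →ₗ[K] A ⊗[K] A) (W : A ⊗[K] A),
        TensorProduct.map f (g ∘ₗ Δ) W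
        = TensorProduct.map f g (TensorProduct.map LinearMap.id Δ W) := by
      intro f g W
      conv_rhs => rw [← LinearMap.comp_apply, ← TensorProduct.map_comp, LinearMap.comp_id]
    have splitmap2 : ∀ (g : A ⊗[K] A →ₗ[K] A ⊗[K] A) (W : A ⊗[K] A),
        TensorProduct.map (g ∘ₗ Δ) LinearMap.id W
        = TensorProduct.map g LinearMap.id (TensorProduct.map Δ LinearMap.id W) := by
      intro g W
      conv_rhs => rw [← LinearMap.comp_apply, ← TensorProduct.map_comp, LinearMap.comp_id]
    have comb : ∀ (f : A →ₗ[K] A) (g : A ⊗[K] A →ₗ[K] A ⊗[K] A) (X : A ⊗[K] (A ⊗[K] A)),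
        TensorProduct.map f g
          (TensorProduct.map ω.symm.toLinearMap (TensorProduct.map LinearMap.id ψ.toLinearMap) X)
        = TensorProduct.map (f ∘ₗ ω.symm.toLinearMap)
            (g ∘ₗ TensorProduct.map LinearMap.id ψ.toLinearMap) X := by
      intro f g X
      rw [TensorProduct.map_comp, LinearMap.comp_apply]
    have e1 : ∀ t : A, TensorProduct.map (g1D K A μ α β ω t)
          ((TensorProduct.map ψ.symm.toLinearMap ψ.symm.toLinearMap) ∘ₗ Δ) (Δ c)
        = TensorProduct.map (g1D K A μ α β ω t ∘ₗ ω.symm.toLinearMap)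
            ((TensorProduct.map ψ.symm.toLinearMap ψ.symm.toLinearMap) ∘ₗ
              (TensorProduct.map LinearMap.id ψ.toLinearMap))
            ((TensorProduct.assoc K A A A) (TensorProduct.map Δ LinearMap.id (Δ c))) := by
      intro t
      rw [splitmap, ce, comb]
    have e3 : ∀ t : A, TensorProduct.map (restD K A μ α β ψ ω t ∘ₗ Δ) LinearMap.id (Δ c)
        = TensorProduct.map (restD K A μ α β ψ ω t) LinearMap.id
            ((TensorProduct.assoc K A A A).symm
              ((TensorProduct.assoc K A A A) (TensorProduct.map Δ LinearMap.id (Δ c)))) := by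
      intro t
      rw [LinearEquiv.symm_apply_apply, splitmap2]
    -- the main expansion
    have main : ∀ a b : A,
        Star17 K A μ Δ α β ψ ω (α (β a)) (Star17 K A μ Δ α β ψ ω (α b) c)
          - Star17 K A μ Δ α β ψ ω (Star17 K A μ Δ α β ψ ω (β a) (α b)) (β c)
        = Lp K A μ α β ψ ω (α (β a)) (TensorProduct.map μ β.toLinearMap
            ((TensorProduct.assoc K A A A).symm
              (TensorProduct.map (g1D K A μ α β ω (α b) ∘ₗ ω.symm.toLinearMap)
                ((TensorProduct.map ψ.symm.toLinearMap ψ.symm.toLinearMap) ∘ₗ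
                  (TensorProduct.map LinearMap.id ψ.toLinearMap))
                ((TensorProduct.assoc K A A A) (TensorProduct.map Δ LinearMap.id (Δ c))))))
        + Lp K A μ α β ψ ω (α (β a)) (TensorProduct.map α.toLinearMap μ
            ((TensorProduct.assoc K A A A)
              (TensorProduct.map (restD K A μ α β ψ ω (α b)) LinearMap.id
                ((TensorProduct.assoc K A A A).symm
                  ((TensorProduct.assoc K A A A)
                    (TensorProduct.map Δ LinearMap.id (Δ c)))))))
        + Lp K A μ α β ψ ω (α (β a)) (TensorProduct.map α.toLinearMap μ
            ((TensorProduct.assoc K A A A)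
              (TensorProduct.map (h4D K A lam α β ψ ω (α b)) LinearMap.id (Δ c))))
        + Lp K A μ α β ψ ω (α (β a))
            (lam • (TensorProduct.map (α.toLinearMap ∘ₗ g1D K A μ α β ω (α b))
              β.toLinearMap (Δ c))) := by
      intro a b
      simp only [hS]
      rw [step1 (α b) (Δ c), dα b, dβ c]
      simp only [map_add]
      rw [step2 a (Δ b) (Δ c), e1 (α b), e3 (α b)]
      have hmsmul : ∀ (X : A ⊗[K] A),
          Lp K A μ α β ψ ω (α (β a)) (lam • X) = Lp K A μ α β ψ ω (α (β a)) (lam • X) := fun _ => rfl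
      abel
    rw [main a b, main b a, S1 a b, ← S1 b a, S2 a b, ← S2 b a]
    abel
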